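/- In the E6 configuration, every pair of orthogonal lines extends to a triple of mutually orthogonal lines, and every triple of mutually orthogonal lines extends to a 4-tuple of mutually orthogonal lines within the configuration. -/

import Mathlib

/-- Vectors `(x; y; z) ∈ ℝ⁹` written as three blocks of three coordinates. -/
abbrev V9 : Type := Fin 3 → Fin 3 → ℝ

/-- The vector with blocks `a`, `b`, `c`. -/
def blk (a b c : Fin 3 → ℝ) : V9 := ![a, b, c]

/-- The standard inner product on `ℝ⁹`. -/
def dot9 (v w : V9) : ℝ := ∑ b, ∑ p, v b p * w b p

/-- The projective line (ray) spanned by a vector. -/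
def ray9 (v : V9) : Submodule ℝ V9 := Submodule.span ℝ {v}

/-- Orthogonality of subspaces of `ℝ⁹`. -/
def Perp9 (L M : Submodule ℝ V9) : Prop := ∀ x ∈ L, ∀ y ∈ M, dot9 x y = 0

/-- The three vectors `(1,−1,0)`, `(1,0,−1)`, `(0,1,−1)`. -/
def xis : Set (Fin 3 → ℝ) := {![1, -1, 0], ![1, 0, -1], ![0, 1, -1]}

/-- The three vectors `(2,−1,−1)`, `(−1,2,−1)`, `(−1,−1,2)`. -/
def etas : Set (Fin 3 → ℝ) := {![2, -1, -1], ![-1, 2, -1], ![-1, -1, 2]}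

/-- The 72 roots of `E6`, modeled in the subspace
`R = {(x;y;z) : Σxᵢ = Σyⱼ = Σzₖ = 0}` of `ℝ⁹`: the 9 vectors `(ξ;0;0)`, `(0;ξ;0)`,
`(0;0;ξ)` with `ξ ∈ xis`, the 27 vectors `(1/3)(ξ;η;ζ)` with `ξ,η,ζ ∈ etas`, and the
negatives of all of these. -/
def E6roots : Set V9 :=
  {v | ∃ w : V9, (v = w ∨ v = -w) ∧
    ((∃ ξ ∈ xis, w = blk ξ 0 0 ∨ w = blk 0 ξ 0 ∨ w = blk 0 0 ξ) ∨
     (∃ ξ ∈ etas, ∃ η ∈ etas, ∃ ζ ∈ etas, w = ((1 : ℝ) / 3) • blk ξ η ζ))}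

/-- The 36 projective lines of the `E6` configuration. -/
def E6lines : Set (Submodule ℝ V9) := ray9 '' E6roots

/-!
Each line of the configuration is spanned by one of 36 explicit vectors: a vector `ξ` of
`xis` placed in one of the three blocks, or `(η; η'; η'')` with `η, η', η'' ∈ etas`. Their
Gram matrix is integral, and two lines are orthogonal exactly when the corresponding entry
vanishes, so both extension properties become finite statements about a `36 × 36` integer
matrix, which the kernel checks. No line is orthogonal to itself, so a line orthogonal to
every member of an orthogonal family is new and enlarges the family by one.
-/

theorem Set.Pairwise.exists_superset_ncard_succ {α : Type*} {r : α → α → Prop} [Std.Symm r]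
    {U s : Set α} {a : α} (hsU : s ⊆ U) (hs : s.Pairwise r) (hfin : s.Finite) (haU : a ∈ U)
    (ha : ¬ r a a) (has : ∀ b ∈ s, r a b) :
    ∃ t, s ⊆ t ∧ t ⊆ U ∧ t.ncard = s.ncard + 1 ∧ t.Pairwise r := by
  have hnot : a ∉ s := fun h => ha (has a h)
  refine ⟨insert a s, Set.subset_insert a s, Set.insert_subset haU hsU,
    Set.ncard_insert_of_notMem hnot hfin, hs.insert_of_symm fun b hb _ => has b hb⟩

lemma dot9_comm (v w : V9) : dot9 v w = dot9 w v := by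
  simp only [dot9, mul_comm]

lemma dot9_smul_left (t : ℝ) (v w : V9) : dot9 (t • v) w = t * dot9 v w := by
  simp [dot9, Finset.mul_sum, mul_assoc]

lemma dot9_blk (a b c a' b' c' : Fin 3 → ℝ) :
    dot9 (blk a b c) (blk a' b' c') = a ⬝ᵥ a' + b ⬝ᵥ b' + c ⬝ᵥ c' := by
  simp [dot9, blk, dotProduct, Fin.sum_univ_three]

lemma perp9_ray9_iff {v w : V9} : Perp9 (ray9 v) (ray9 w) ↔ dot9 v w = 0 := by
  refine ⟨fun h => h v (Submodule.mem_span_singleton_self v) w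
    (Submodule.mem_span_singleton_self w), fun h x hx y hy => ?_⟩
  obtain ⟨s, rfl⟩ := Submodule.mem_span_singleton.mp hx
  obtain ⟨t, rfl⟩ := Submodule.mem_span_singleton.mp hy
  rw [dot9_smul_left, dot9_comm, dot9_smul_left, dot9_comm w v, h, mul_zero, mul_zero]

instance : Std.Symm Perp9 :=
  ⟨fun _ _ h x hx y hy => dot9_comm x y ▸ h y hy x hx⟩

lemma ray9_smul {c : ℝ} (hc : c ≠ 0) (v : V9) : ray9 (c • v) = ray9 v :=
  Submodule.span_singleton_smul_eq (IsUnit.mk0 c hc) v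

lemma ray9_neg (v : V9) : ray9 (-v) = ray9 v := by
  simpa using ray9_smul (c := -1) (by norm_num) v

def xiVec : Fin 3 → Fin 3 → ℝ := ![![1, -1, 0], ![1, 0, -1], ![0, 1, -1]]

def etaVec : Fin 3 → Fin 3 → ℝ := ![![2, -1, -1], ![-1, 2, -1], ![-1, -1, 2]]

lemma xis_eq_range : xis = Set.range xiVec := by
  simp [xis, xiVec, Set.range, Fin.exists_fin_succ, Set.ext_iff, or_comm, or_left_comm, eq_comm]

lemma etas_eq_range : etas = Set.range etaVec := by
  simp [etas, etaVec, Set.range, Fin.exists_fin_succ, Set.ext_iff, or_comm, or_left_comm, eq_comm]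

/-- `.inl (b, i)` indexes the line of `ξᵢ` in block `b`, `.inr (i, j, k)` that of
`(ηᵢ; ηⱼ; ηₖ)`. -/
abbrev LineIndex : Type := (Fin 3 × Fin 3) ⊕ (Fin 3 × Fin 3 × Fin 3)

/-- For `.inr` this is `3` times the root, so that all inner products are integers. -/
def rep : LineIndex → V9
  | .inl (b, i) => ![blk (xiVec i) 0 0, blk 0 (xiVec i) 0, blk 0 0 (xiVec i)] b
  | .inr (i, j, k) => blk (etaVec i) (etaVec j) (etaVec k)

def xiGram : Fin 3 → Fin 3 → ℤ := ![![2, 1, -1], ![1, 2, 1], ![-1, 1, 2]]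

def xiEtaGram : Fin 3 → Fin 3 → ℤ := ![![3, -3, 0], ![3, 0, -3], ![0, 3, -3]]

def etaGram : Fin 3 → Fin 3 → ℤ := ![![6, -3, -3], ![-3, 6, -3], ![-3, -3, 6]]

def lineGram : LineIndex → LineIndex → ℤ
  | .inl (b, i), .inl (b', i') => if b = b' then xiGram i i' else 0
  | .inl (b, i), .inr (j, k, l) => xiEtaGram i (![j, k, l] b)
  | .inr (j, k, l), .inl (b, i) => xiEtaGram i (![j, k, l] b)
  | .inr (i, j, k), .inr (i', j', k') => etaGram i i' + etaGram j j' + etaGram k k'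

lemma xiVec_dotProduct_xiVec (i j : Fin 3) : xiVec i ⬝ᵥ xiVec j = xiGram i j := by
  fin_cases i <;> fin_cases j <;> norm_num [dotProduct, xiVec, xiGram, Fin.sum_univ_three,
    Matrix.cons_val_two, Matrix.tail_cons, Matrix.head_cons]

lemma xiVec_dotProduct_etaVec (i j : Fin 3) : xiVec i ⬝ᵥ etaVec j = xiEtaGram i j := by
  fin_cases i <;> fin_cases j <;> norm_num [dotProduct, xiVec, etaVec, xiEtaGram,
    Fin.sum_univ_three, Matrix.cons_val_two, Matrix.tail_cons, Matrix.head_cons]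

lemma etaVec_dotProduct_etaVec (i j : Fin 3) : etaVec i ⬝ᵥ etaVec j = etaGram i j := by
  fin_cases i <;> fin_cases j <;> norm_num [dotProduct, etaVec, etaGram, Fin.sum_univ_three,
    Matrix.cons_val_two, Matrix.tail_cons, Matrix.head_cons]

lemma dot9_rep (a b : LineIndex) : dot9 (rep a) (rep b) = lineGram a b := by
  rcases a with ⟨c, i⟩ | ⟨i, j, k⟩ <;> rcases b with ⟨b', i'⟩ | ⟨i', j', k'⟩
  · fin_cases c <;> fin_cases b' <;> simp [rep, lineGram, dot9_blk, xiVec_dotProduct_xiVec]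
  · fin_cases c <;> simp [rep, lineGram, dot9_blk, xiVec_dotProduct_etaVec]
  · fin_cases b' <;>
      simp [rep, lineGram, dot9_blk, dotProduct_comm (etaVec _), xiVec_dotProduct_etaVec]
  · simp [rep, lineGram, dot9_blk, etaVec_dotProduct_etaVec]

lemma perp9_rep_iff {a b : LineIndex} :
    Perp9 (ray9 (rep a)) (ray9 (rep b)) ↔ lineGram a b = 0 := by
  rw [perp9_ray9_iff, dot9_rep]
  exact_mod_cast Iff.rfl

lemma ray9_rep_mem_E6lines (a : LineIndex) : ray9 (rep a) ∈ E6lines := by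
  rcases a with ⟨b, i⟩ | ⟨i, j, k⟩
  · refine ⟨rep (.inl (b, i)),
      ⟨_, Or.inl rfl, Or.inl ⟨xiVec i, xis_eq_range ▸ ⟨i, rfl⟩, ?_⟩⟩, rfl⟩
    fin_cases b <;> simp [rep]
  · refine ⟨(1 / 3 : ℝ) • rep (.inr (i, j, k)), ⟨_, Or.inl rfl, Or.inr ?_⟩,
      ray9_smul (by norm_num) _⟩
    simp only [etas_eq_range, Set.exists_range_iff]
    exact ⟨i, j, k, rfl⟩

lemma exists_eq_ray9_rep_of_mem_E6lines {L : Submodule ℝ V9} (hL : L ∈ E6lines) :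
    ∃ a, ray9 (rep a) = L := by
  obtain ⟨v, ⟨w, hvw, hw⟩, rfl⟩ := hL
  have hray : ray9 v = ray9 w := by obtain rfl | rfl := hvw; exacts [rfl, ray9_neg w]
  rw [hray]
  rw [xis_eq_range, etas_eq_range] at hw
  rcases hw with ⟨_, ⟨i, rfl⟩, rfl | rfl | rfl⟩ | ⟨_, ⟨i, rfl⟩, _, ⟨j, rfl⟩, _, ⟨k, rfl⟩, rfl⟩
  exacts [⟨.inl (0, i), rfl⟩, ⟨.inl (1, i), rfl⟩, ⟨.inl (2, i), rfl⟩,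
    ⟨.inr (i, j, k), (ray9_smul (by norm_num) _).symm⟩]

lemma E6lines_eq_range : E6lines = Set.range fun a => ray9 (rep a) :=
  Set.Subset.antisymm (fun _ hL => exists_eq_ray9_rep_of_mem_E6lines hL)
    (Set.range_subset_iff.mpr ray9_rep_mem_E6lines)

lemma lineGram_self_ne_zero : ∀ a, lineGram a a ≠ 0 := by decide

lemma exists_lineGram_eq_zero_of_pair :
    ∀ a b, lineGram a b = 0 → ∃ c, lineGram a c = 0 ∧ lineGram b c = 0 := by decide

lemma exists_lineGram_eq_zero_of_triple : ∀ a b c,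
    lineGram a b = 0 ∧ lineGram a c = 0 ∧ lineGram b c = 0 →
      ∃ d, lineGram a d = 0 ∧ lineGram b d = 0 ∧ lineGram c d = 0 := by
  decide +kernel

lemma not_perp9_self_of_mem_E6lines {L : Submodule ℝ V9} (hL : L ∈ E6lines) :
    ¬Perp9 L L := by
  obtain ⟨a, rfl⟩ := exists_eq_ray9_rep_of_mem_E6lines hL
  exact perp9_rep_iff.not.mpr (lineGram_self_ne_zero a)

lemma exists_perp9_E6line_of_pair {L₁ L₂ : Submodule ℝ V9} (h₁ : L₁ ∈ E6lines)
    (h₂ : L₂ ∈ E6lines) (h : Perp9 L₁ L₂) :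
    ∃ L ∈ E6lines, ∀ M ∈ ({L₁, L₂} : Set (Submodule ℝ V9)), Perp9 L M := by
  rw [E6lines_eq_range] at h₁ h₂ ⊢
  obtain ⟨⟨a, rfl⟩, ⟨b, rfl⟩⟩ := And.intro h₁ h₂
  obtain ⟨c, hac, hbc⟩ := exists_lineGram_eq_zero_of_pair a b (perp9_rep_iff.mp h)
  refine ⟨_, ⟨c, rfl⟩, ?_⟩
  simp only [Set.mem_insert_iff, Set.mem_singleton_iff, forall_eq_or_imp, forall_eq]
  exact ⟨symm (perp9_rep_iff.mpr hac), symm (perp9_rep_iff.mpr hbc)⟩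

lemma exists_perp9_E6line_of_triple {L₁ L₂ L₃ : Submodule ℝ V9} (h₁ : L₁ ∈ E6lines)
    (h₂ : L₂ ∈ E6lines) (h₃ : L₃ ∈ E6lines) (h₁₂ : Perp9 L₁ L₂) (h₁₃ : Perp9 L₁ L₃)
    (h₂₃ : Perp9 L₂ L₃) :
    ∃ L ∈ E6lines, ∀ M ∈ ({L₁, L₂, L₃} : Set (Submodule ℝ V9)), Perp9 L M := by
  rw [E6lines_eq_range] at h₁ h₂ h₃ ⊢
  obtain ⟨⟨a, rfl⟩, ⟨b, rfl⟩, ⟨c, rfl⟩⟩ := And.intro h₁ (And.intro h₂ h₃)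
  obtain ⟨d, had, hbd, hcd⟩ := exists_lineGram_eq_zero_of_triple a b c
    ⟨perp9_rep_iff.mp h₁₂, perp9_rep_iff.mp h₁₃, perp9_rep_iff.mp h₂₃⟩
  refine ⟨_, ⟨d, rfl⟩, ?_⟩
  simp only [Set.mem_insert_iff, Set.mem_singleton_iff, forall_eq_or_imp, forall_eq]
  exact ⟨symm (perp9_rep_iff.mpr had), symm (perp9_rep_iff.mpr hbd),
    symm (perp9_rep_iff.mpr hcd)⟩

/-- in the `E6` configuration every pair of orthogonal lines extends to
a triple of mutually orthogonal lines, and every triple of mutually orthogonal lines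
extends to a 4-tuple of mutually orthogonal lines within the configuration. -/
theorem stmt_14 :
    (∀ S ⊆ E6lines, S.ncard = 2 → S.Pairwise Perp9 →
      ∃ T, S ⊆ T ∧ T ⊆ E6lines ∧ T.ncard = 3 ∧ T.Pairwise Perp9) ∧
    (∀ S ⊆ E6lines, S.ncard = 3 → S.Pairwise Perp9 →
      ∃ T, S ⊆ T ∧ T ⊆ E6lines ∧ T.ncard = 4 ∧ T.Pairwise Perp9) := by
  refine ⟨fun S hS hcard hpw => ?_, fun S hS hcard hpw => ?_⟩
  · obtain ⟨L₁, L₂, h₁₂, rfl⟩ := Set.ncard_eq_two.mp hcard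
    obtain ⟨L, hL, hLS⟩ := exists_perp9_E6line_of_pair (hS (by simp)) (hS (by simp))
      (hpw (by simp) (by simp) h₁₂)
    simpa only [hcard] using hpw.exists_superset_ncard_succ hS (Set.toFinite _) hL
      (not_perp9_self_of_mem_E6lines hL) hLS
  · obtain ⟨L₁, L₂, L₃, h₁₂, h₁₃, h₂₃, rfl⟩ := Set.ncard_eq_three.mp hcard
    obtain ⟨L, hL, hLS⟩ := exists_perp9_E6line_of_triple (hS (by simp)) (hS (by simp))
      (hS (by simp)) (hpw (by simp) (by simp) h₁₂) (hpw (by simp) (by simp) h₁₃)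
      (hpw (by simp) (by simp) h₂₃)
    simpa only [hcard] using hpw.exists_superset_ncard_succ hS (Set.toFinite _) hL
      (not_perp9_self_of_mem_E6lines hL) hLS
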